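/- arXiv:1810.11011 — 4 statements merged into one kernel-verified Lean document; each statement's English description precedes it below -/
import Mathlib

section
/- For every $k \geq 1$, every group homomorphism from $SL_2(\mathbb{Z}/5)$ to the general linear group $GL_2(\mathbb{Z}/2^k)$ of invertible $2 \times 2$ matrices over $\mathbb{Z}/2^k$ is trivial. -/
/-!
`SL₂(𝔽₅)` is generated by transvections, and a transvection has order `5`. On the other side,
every `y ∈ GL₂(ℤ/2^k)` satisfies `y ^ (6 * 2^k) = 1`: `|GL₂(𝔽₂)| = 6`, so `y⁶` reduces to `1`
mod `2`, i.e. `y⁶ = 1 + 2B`, and `(1 + 2B) ^ 2^k = 1` because `2^k = 0`. As `5` is coprime to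
`6 * 2^k`, the homomorphism kills every transvection, hence everything.
-/

open Matrix Polynomial

theorem one_add_natCast_mul_pow_pow_eq_one {R : Type*} [Ring R] {p k : ℕ}
    (hp : (p : R) ^ k = 0) (b : R) : (1 + p * b) ^ p ^ k = 1 := by
  obtain ⟨q, hq⟩ : ((p : ℤ[X]) ^ (k + 1)) ∣ (1 + (p : ℤ[X]) * X) ^ p ^ k - 1 ^ p ^ k :=
    dvd_sub_pow_of_dvd_sub (by simp) k
  simpa [pow_succ, hp] using congrArg (aeval b) (sub_eq_iff_eq_add'.mp hq)

theorem ZMod.exists_eq_natCast_mul_of_castHom_eq_zero {p k : ℕ} (hk : k ≠ 0)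
    {x : ZMod (p ^ k)} (hx : ZMod.castHom (dvd_pow_self p hk) (ZMod p) x = 0) :
    ∃ c : ZMod (p ^ k), x = p * c := by
  rw [← ZMod.intCast_zmod_cast x, map_intCast, ZMod.intCast_zmod_eq_zero_iff_dvd] at hx
  obtain ⟨c, hc⟩ := hx
  exact ⟨c, by rw [← ZMod.intCast_zmod_cast x, hc, Int.cast_mul, Int.cast_natCast]⟩

namespace Matrix

variable {n : Type*} [Fintype n] [DecidableEq n] {p k : ℕ}

theorem exists_eq_one_add_natCast_mul_of_map_castHom_eq_one (hk : k ≠ 0)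
    {A : Matrix n n (ZMod (p ^ k))}
    (hA : A.map (ZMod.castHom (dvd_pow_self p hk) (ZMod p)) = 1) :
    ∃ B : Matrix n n (ZMod (p ^ k)), A = 1 + p * B := by
  have hentry (i j : n) : ∃ c, A i j - (1 : Matrix n n (ZMod (p ^ k))) i j = p * c := by
    refine ZMod.exists_eq_natCast_mul_of_castHom_eq_zero hk ?_
    rw [map_sub, ← map_apply (f := ZMod.castHom _ _), ← map_apply (f := ZMod.castHom _ _), hA,
      Matrix.map_one _ (map_zero _) (map_one _), sub_self]
  choose c hc using hentry
  exact ⟨of c, ext fun i j => by rw [← nsmul_eq_mul, add_apply, smul_apply, of_apply,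
    nsmul_eq_mul, ← hc, add_sub_cancel]⟩

theorem natCast_pow_eq_zero : (p : Matrix n n (ZMod (p ^ k))) ^ k = 0 := by
  rw [← Nat.cast_pow, ← map_natCast (scalar n), ZMod.natCast_self, map_zero]

namespace GeneralLinearGroup

theorem pow_card_mul_pow_eq_one (hk : k ≠ 0) (y : GL n (ZMod (p ^ k))) :
    y ^ (Nat.card (GL n (ZMod p)) * p ^ k) = 1 := by
  have hred :
      map (ZMod.castHom (dvd_pow_self p hk) (ZMod p)) (y ^ Nat.card (GL n (ZMod p))) = 1 := by
    rw [map_pow, pow_card_eq_one']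
  obtain ⟨B, hB⟩ := exists_eq_one_add_natCast_mul_of_map_castHom_eq_one hk congr(($hred).val)
  rw [pow_mul]
  ext1
  rw [Units.val_pow_eq_pow_val, hB, one_add_natCast_mul_pow_pow_eq_one natCast_pow_eq_zero,
    Units.val_one]

theorem eq_one_of_pow_eq_one_of_coprime (hk : k ≠ 0) {m : ℕ}
    (hm : m.Coprime (Nat.card (GL n (ZMod p)) * p ^ k)) {y : GL n (ZMod (p ^ k))}
    (hy : y ^ m = 1) : y = 1 :=
  (pow_eq_one_iff_of_coprime hm).mp ⟨hy, pow_card_mul_pow_eq_one hk y⟩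

end GeneralLinearGroup

namespace SpecialLinearGroup

variable {F : Type*} [CommRing F] {i j : n}

theorem transvection_pow (hij : i ≠ j) (c : F) (m : ℕ) :
    transvection hij c ^ m = transvection hij (m * c) := by
  induction m with
  | zero => simp
  | succ m ih => rw [pow_succ, ih, ← transvection_add, Nat.cast_succ, add_one_mul]

theorem transvection_pow_char_eq_one (p : ℕ) [CharP F p] (hij : i ≠ j) (c : F) :
    transvection hij c ^ p = 1 := by
  rw [transvection_pow, CharP.cast_eq_zero, zero_mul, transvection_coeff_zero]

end SpecialLinearGroup

theorem card_GL_fin_two_zmod_two : Nat.card (GL (Fin 2) (ZMod 2)) = 6 := by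
  rw [card_GL_field]
  decide

end Matrix

/-- For every `k ≥ 1`, every group homomorphism from `SL₂(ℤ/5)` to
`GL₂(ℤ/2^k)` is trivial. -/
theorem SL2_ZMod5_hom_to_GL2_ZMod2pow_trivial
    (k : ℕ) (hk : 1 ≤ k)
    (f : Matrix.SpecialLinearGroup (Fin 2) (ZMod 5) →*
      Matrix.GeneralLinearGroup (Fin 2) (ZMod (2 ^ k))) : f = 1 := by
  have : Fact (Nat.Prime 5) := ⟨Nat.prime_five⟩
  have hcop : Nat.Coprime 5 (Nat.card (GL (Fin 2) (ZMod 2)) * 2 ^ k) := by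
    rw [card_GL_fin_two_zmod_two]
    exact Nat.Coprime.mul_right (by decide) (Nat.Coprime.pow_right _ (by decide))
  ext1 A
  refine SL2.transvection_induction (fun A => f A = 1) (fun i j hij c => ?_)
    (fun A B hA hB => by rw [map_mul, hA, hB, one_mul]) A
  refine GeneralLinearGroup.eq_one_of_pow_eq_one_of_coprime (by omega) hcop ?_
  rw [← map_pow, SpecialLinearGroup.transvection_pow_char_eq_one 5, map_one]
end

section
/- For every $k \geq 1$, every group homomorphism from $SL_2(\mathbb{Z}/5)$ to the general linear group $GL_2(\mathbb{Z}/3^k)$ of invertible $2 \times 2$ matrices over $\mathbb{Z}/3^k$ is trivial. -/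
/-!
SL₂(𝔽₅) is generated by transvections, which have order 5, so it suffices that GL₂(ℤ/3^k) has
no element of order 5. Such an element `x` reduces to `1` modulo 3 because `|GL₂(𝔽₃)| = 48` is
prime to 5, so `x - 1` is nilpotent. Then `0 = x⁵ - 1 = (1 + x + ⋯ + x⁴)(x - 1)`, and the first
factor is `5` plus a nilpotent commuting with it, a unit in ℤ/3^k; hence `x = 1`.
-/

theorem eq_one_of_pow_eq_one_of_isNilpotent_sub_one {R : Type*} [Ring R] {n : ℕ}
    (hn : IsUnit (n : R)) {x : R} (hx : IsNilpotent (x - 1)) (h : x ^ n = 1) : x = 1 := by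
  set S := ∑ i ∈ Finset.range n, x ^ i
  set T := ∑ i ∈ Finset.range n, ∑ j ∈ Finset.range i, x ^ j
  have hS : S * (x - 1) = 0 := by rw [geom_sum_mul, h, sub_self]
  have hST : S - n = T * (x - 1) := by
    rw [Finset.sum_mul, Finset.sum_congr rfl fun i _ => geom_sum_mul x i, Finset.sum_sub_distrib,
      Finset.sum_const, Finset.card_range, nsmul_one]
  have hT : Commute T (x - 1) :=
    Commute.sum_left _ _ _ fun _ _ => Commute.sum_left _ _ _ fun j _ =>
      ((Commute.refl x).sub_right (Commute.one_right x)).pow_left j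
  have hSunit : IsUnit S := by
    have hnil : IsNilpotent (S - n) := hST ▸ hT.isNilpotent_mul_left hx
    rw [← add_sub_cancel (n : R) S]
    exact hnil.isUnit_add_left_of_commute hn (Nat.cast_commute n _).symm
  exact sub_eq_zero.mp (hSunit.mul_right_eq_zero.mp hS)

section Reduction

variable {p k : ℕ} [NeZero p]

theorem ZMod.exists_eq_mul_of_castHom_eq_zero (hk : k ≠ 0)
    {a : ZMod (p ^ k)} (ha : ZMod.castHom (dvd_pow_self p hk) (ZMod p) a = 0) :
    ∃ b, a = p * b := by
  rw [ZMod.castHom_apply, ← ZMod.natCast_val, ZMod.natCast_eq_zero_iff] at ha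
  obtain ⟨c, hc⟩ := ha
  exact ⟨c, by rw [← ZMod.natCast_zmod_val a, hc, Nat.cast_mul]⟩

theorem Matrix.isNilpotent_of_map_castHom_eq_zero {ι : Type*} [Fintype ι] [DecidableEq ι]
    (hk : k ≠ 0) {M : Matrix ι ι (ZMod (p ^ k))}
    (hM : M.map (ZMod.castHom (dvd_pow_self p hk) (ZMod p)) = 0) : IsNilpotent M := by
  choose b hb using fun i j => ZMod.exists_eq_mul_of_castHom_eq_zero hk (congr_fun₂ hM i j)
  have hMb : M = (p : ZMod (p ^ k)) • Matrix.of b := by ext i j; exact hb i j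
  refine ⟨k, ?_⟩
  rw [hMb, smul_pow, ← Nat.cast_pow, ZMod.natCast_self, zero_smul]

theorem Matrix.GeneralLinearGroup.eq_one_of_pow_eq_one {ι : Type*} [Fintype ι] [DecidableEq ι]
    {n : ℕ} (hk : k ≠ 0) (hnp : n.Coprime p)
    (hn : (Nat.card (GL ι (ZMod p))).Coprime n) {x : GL ι (ZMod (p ^ k))} (hx : x ^ n = 1) :
    x = 1 := by
  set π := ZMod.castHom (dvd_pow_self p hk) (ZMod p)
  have hred : map π x = 1 :=
    hn.pow_left_bijective.injective (by rw [← map_pow, hx, map_one, one_pow])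
  have hnil : IsNilpotent ((x : Matrix ι ι (ZMod (p ^ k))) - 1) := by
    refine Matrix.isNilpotent_of_map_castHom_eq_zero hk ?_
    rw [← RingHom.mapMatrix_apply, map_sub, map_one, sub_eq_zero]
    exact congr_arg Units.val hred
  have hunit : IsUnit (n : Matrix ι ι (ZMod (p ^ k))) := by
    simpa using ((ZMod.isUnit_iff_coprime n (p ^ k)).2 (hnp.pow_right k)).map
      (algebraMap (ZMod (p ^ k)) (Matrix ι ι (ZMod (p ^ k))))
  exact Units.ext (eq_one_of_pow_eq_one_of_isNilpotent_sub_one hunit hnil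
    (by simpa using congr_arg Units.val hx))

end Reduction

theorem Matrix.SpecialLinearGroup.transvection_pow_s8 {ι F : Type*} [Fintype ι] [DecidableEq ι]
    [CommRing F] {i j : ι} (hij : i ≠ j) (b : F) (n : ℕ) :
    transvection hij b ^ n = transvection hij (n * b) := by
  induction n with
  | zero => simp
  | succ n ih => rw [pow_succ, ih, ← transvection_add, Nat.cast_succ, add_one_mul]

open Matrix.SpecialLinearGroup in
theorem Matrix.SL2.monoidHom_eq_one_of_forall_pow_char_eq_one {F G : Type*} [Field F] [Group G]
    (p : ℕ) [CharP F p] (hG : ∀ g : G, g ^ p = 1 → g = 1)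
    (φ : Matrix.SpecialLinearGroup (Fin 2) F →* G) : φ = 1 := by
  ext A
  induction A using Matrix.SL2.transvection_induction with
  | htransvec i j hij c =>
    refine hG _ ?_
    rw [← map_pow, transvection_pow_s8, CharP.cast_eq_zero, zero_mul, transvection_coeff_zero,
      map_one]
  | hmul A B hA hB => simp only [map_mul, hA, hB, MonoidHom.one_apply, mul_one]

/-- For every `k ≥ 1`, every group homomorphism from `SL₂(ℤ/5)` to
`GL₂(ℤ/3^k)` is trivial. -/
theorem SL2_ZMod5_hom_to_GL2_ZMod3pow_trivial
    (k : ℕ) (hk : 1 ≤ k)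
    (f : Matrix.SpecialLinearGroup (Fin 2) (ZMod 5) →*
      Matrix.GeneralLinearGroup (Fin 2) (ZMod (3 ^ k))) : f = 1 := by
  have : Fact (Nat.Prime 5) := ⟨Nat.prime_five⟩
  refine Matrix.SL2.monoidHom_eq_one_of_forall_pow_char_eq_one (F := ZMod 5) 5 (fun x hx => ?_) f
  have hcard : Nat.card (GL (Fin 2) (ZMod 3)) = 48 := by
    rw [Matrix.card_GL_field, ZMod.card]
    decide
  exact Matrix.GeneralLinearGroup.eq_one_of_pow_eq_one (p := 3) (by omega) (by norm_num)
    (by rw [hcard]; norm_num) hx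
end

section
/- If $g$ is an invertible $2 \times 2$ matrix over the field $\mathbb{Q}_2$ of $2$-adic numbers with $g^5 = 1$, then $g = 1$. In other words, $GL_2(\mathbb{Q}_2)$ contains no element of order $5$. -/
-- Lemma B: t^2 + t - 1 has no root in ℚ_[2]
lemma lemB (t : ℚ_[2]) : t^2 + t - 1 ≠ 0 := by
  intro h
  have ht : ‖t‖ ≤ 1 := by
    by_contra hlt
    push_neg at hlt
    have h2 : t^2 = 1 - t := by linear_combination h
    have : ‖t‖^2 ≤ max ‖(1:ℚ_[2])‖ ‖-t‖ := by
      calc ‖t‖^2 = ‖t^2‖ := by rw [norm_pow]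
        _ = ‖1 + -t‖ := by rw [h2]; ring_nf
        _ ≤ max ‖(1:ℚ_[2])‖ ‖-t‖ := Padic.nonarchimedean _ _
    rw [norm_neg, norm_one] at this
    have hmax : max 1 ‖t‖ = ‖t‖ := max_eq_right hlt.le
    rw [hmax] at this
    nlinarith
  set z : ℤ_[2] := ⟨t, ht⟩ with hz
  have hzeq : z^2 + z - 1 = 0 := by
    apply Subtype.ext
    push_cast
    exact h
  have := congrArg (PadicInt.toZModPow 3) hzeq
  rw [map_sub, map_add, map_pow, _root_.map_one, _root_.map_zero] at this
  have hx : ∀ x : ZMod (2^3), x^2 + x - 1 ≠ 0 := by decide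
  exact hx _ this


lemma lemA (d : ℚ_[2]) (h : d^5 = 1) : d = 1 := by
  have hn : ‖d‖ = 1 := by
    have h5 : ‖d‖^5 = 1 := by rw [← norm_pow, h, norm_one]
    rcases lt_trichotomy ‖d‖ 1 with hl | he | hg
    · exact absurd h5 (by nlinarith [norm_nonneg d, pow_lt_one₀ (norm_nonneg d) hl (by norm_num : (5:ℕ) ≠ 0)])
    · exact he
    · exact absurd h5 (by nlinarith [one_lt_pow₀ hg (by norm_num : (5:ℕ) ≠ 0)])
  set z : ℤ_[2] := ⟨d, hn.le⟩ with hz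
  have hzeq : z^5 = 1 := by apply Subtype.ext; push_cast; exact h
  have hfac : (z - 1) * (z^4 + z^3 + z^2 + z + 1) = 0 := by linear_combination hzeq
  have hu : z^4 + z^3 + z^2 + z + 1 ≠ 0 := by
    intro h0
    have h1 := congrArg (PadicInt.toZMod) h0
    have h2 := congrArg (PadicInt.toZMod) hzeq
    rw [map_pow] at h2
    simp only [map_add, map_pow, _root_.map_one, _root_.map_zero] at h1
    have hz1 : PadicInt.toZMod z = 1 := by
      have : ∀ x : ZMod 2, x^5 = 1 → x = 1 := by decide
      exact this _ (by rw [h2, _root_.map_one])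
    rw [hz1] at h1
    exact absurd h1 (by decide)
  have := mul_eq_zero.mp hfac
  rcases this with h1 | h1
  · have : z = 1 := sub_eq_zero.mp h1
    have := congrArg (Subtype.val) this
    simpa using this
  · exact absurd h1 hu


lemma CH2 (M : Matrix (Fin 2) (Fin 2) ℚ_[2]) :
    M * M - M.trace • M + M.det • (1 : Matrix (Fin 2) (Fin 2) ℚ_[2]) = 0 := by
  ext i j
  fin_cases i <;> fin_cases j <;>
    simp [Matrix.mul_apply, Fin.sum_univ_two, Matrix.trace_fin_two, Matrix.det_fin_two,
      Matrix.one_apply] <;> ring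

/-- `GL₂(ℚ₂)` contains no element of order 5: if `g⁵ = 1` then `g = 1`. -/
theorem GL2_Q2_no_order_five
    (g : Matrix.GeneralLinearGroup (Fin 2) ℚ_[2]) (hg : g ^ 5 = 1) : g = 1 := by
  set M : Matrix (Fin 2) (Fin 2) ℚ_[2] := (g : Matrix (Fin 2) (Fin 2) ℚ_[2]) with hMdef
  have hM : M ^ 5 = 1 := by
    rw [hMdef, ← Units.val_pow_eq_pow_val, hg, Units.val_one]
  have hd : M.det = 1 := by
    apply lemA
    rw [← Matrix.det_pow, hM, Matrix.det_one]
  set t : ℚ_[2] := M.trace with htdef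
  have h2 : M ^ 2 = t • M - 1 := by
    have := CH2 M
    rw [hd, one_smul] at this
    rw [sq]
    linear_combination (norm := abel) this
  have h3 : M ^ 3 = (t^2 - 1) • M - t • 1 := by
    rw [pow_succ, h2, sub_mul, smul_mul_assoc, one_mul, ← sq, h2]
    match_scalars <;> ring
  have h4 : M ^ 4 = (t^3 - 2*t) • M - (t^2 - 1) • 1 := by
    rw [show (4:ℕ) = 3 + 1 from rfl, pow_succ, h3, sub_mul, smul_mul_assoc,
      smul_mul_assoc, one_mul, ← sq, h2]
    match_scalars <;> ring
  have h5 : M ^ 5 = (t^4 - 3*t^2 + 1) • M - (t^3 - 2*t) • (1 : Matrix (Fin 2) (Fin 2) ℚ_[2]) := by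
    rw [show (5:ℕ) = 4 + 1 from rfl, pow_succ, h4, sub_mul, smul_mul_assoc,
      smul_mul_assoc, one_mul, ← sq, h2]
    match_scalars <;> ring
  have he : (t^4 - 3*t^2 + 1) • M - (t^3 - 2*t) • (1 : Matrix (Fin 2) (Fin 2) ℚ_[2]) = 1 := by
    rw [← h5, hM]
  have hkey : (t^4 - 3*t^2 + 1) • M = (t^3 - 2*t + 1) • (1 : Matrix (Fin 2) (Fin 2) ℚ_[2]) :=
    calc (t^4 - 3*t^2 + 1) • M
        = ((t^4 - 3*t^2 + 1) • M - (t^3 - 2*t) • (1 : Matrix (Fin 2) (Fin 2) ℚ_[2]))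
          + (t^3 - 2*t) • (1 : Matrix (Fin 2) (Fin 2) ℚ_[2]) := by abel
      _ = 1 + (t^3 - 2*t) • (1 : Matrix (Fin 2) (Fin 2) ℚ_[2]) := by rw [he]
      _ = (t^3 - 2*t + 1) • (1 : Matrix (Fin 2) (Fin 2) ℚ_[2]) := by
          match_scalars; ring
  by_cases ha : t^4 - 3*t^2 + 1 = 0
  · exfalso
    have hb : t^3 - 2*t + 1 = 0 := by
      have h00 := congrFun (congrFun hkey 0) 0
      simp [ha, Matrix.smul_apply, Matrix.one_apply] at h00
      exact h00.symm
    have ht1 : t^2 + t - 1 = 0 := by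
      rcases mul_eq_zero.mp (show (t - 1) * (t^2 + t - 1) = 0 by linear_combination hb) with h | h
      · exfalso
        have : t = 1 := sub_eq_zero.mp h
        rw [this] at ha
        norm_num at ha
      · exact h
    exact lemB t ht1
  · set lam : ℚ_[2] := (t^3 - 2*t + 1) / (t^4 - 3*t^2 + 1) with hlam
    have hMlam : M = lam • 1 := by
      have := congrArg (fun N => (t^4 - 3*t^2 + 1)⁻¹ • N) hkey
      simp only [smul_smul, inv_mul_cancel₀ ha, one_smul] at this
      rw [this, hlam]
      match_scalars
      field_simp
    have hlam5 : lam ^ 5 = 1 := by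
      have : M ^ 5 = lam ^ 5 • 1 := by rw [hMlam, smul_pow, one_pow]
      rw [hM] at this
      have h00 := congrFun (congrFun this 0) 0
      simpa [Matrix.smul_apply, Matrix.one_apply] using h00.symm
    have : lam = 1 := lemA lam hlam5
    apply Units.ext
    rw [Units.val_one, ← hMdef, hMlam, this, one_smul]
end

section
/- If $g$ is an invertible $2 \times 2$ matrix over the field $\mathbb{Q}_3$ of $3$-adic numbers with $g^5 = 1$, then $g = 1$. In other words, $GL_2(\mathbb{Q}_3)$ contains no element of order $5$. -/
open Matrix

/-- Every solution of `x⁵ = 1` in `ℚ_[3]` is `1`. -/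
lemma Q3_fifth_root_eq_one {x : ℚ_[3]} (hx : x ^ 5 = 1) : x = 1 := by
  have hnorm : ‖x‖ ≤ 1 := by
    apply le_of_pow_le_pow_left₀ (n := 5) (by norm_num) zero_le_one
    rw [← norm_pow, hx, norm_one, one_pow]
  set a : ℤ_[3] := ⟨x, hnorm⟩ with ha
  have ha5 : a ^ 5 = 1 := Subtype.coe_injective (by push_cast; exact hx)
  have hc : PadicInt.toZMod a = 1 := by
    have h1 : (PadicInt.toZMod a) ^ 5 = 1 := by
      rw [← map_pow, ha5, _root_.map_one]
    have hall : ∀ c : ZMod 3, c ^ 5 = 1 → c = 1 := by decide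
    exact hall _ h1
  by_contra hne
  have hane : a ≠ 1 := by
    intro h
    exact hne (by simpa using congrArg (fun z : ℤ_[3] => (z : ℚ_[3])) h)
  have hs : a ^ 4 + a ^ 3 + a ^ 2 + a + 1 = 0 := by
    have hfact : (a - 1) * (a ^ 4 + a ^ 3 + a ^ 2 + a + 1) = 0 := by
      linear_combination ha5
    rcases mul_eq_zero.mp hfact with h | h
    · exact absurd (sub_eq_zero.mp h) hane
    · exact h
  have h0 := congrArg PadicInt.toZMod hs
  rw [map_add, map_add, map_add, map_add, map_pow, map_pow, map_pow, _root_.map_one,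
    map_zero, hc] at h0
  have : ((5 : ZMod 3) ≠ 0) := by decide
  exact this h0

/-- `5` is not a square in `ℚ_[3]`. -/
lemma Q3_five_not_square (y : ℚ_[3]) : y ^ 2 ≠ 5 := by
  intro hy
  have h5 : ‖(5 : ℚ_[3])‖ = 1 := by
    have hle : ‖((5 : ℤ) : ℚ_[3])‖ ≤ 1 := Padic.norm_int_le_one 5
    have hlt : ¬ ‖((5 : ℤ) : ℚ_[3])‖ < 1 := by
      rw [Padic.norm_intCast_lt_one_iff]
      decide
    push_cast at hle hlt
    linarith
  have hnorm : ‖y‖ ≤ 1 := by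
    apply le_of_pow_le_pow_left₀ (n := 2) (by norm_num) zero_le_one
    rw [← norm_pow, hy, h5, one_pow]
  set b : ℤ_[3] := ⟨y, hnorm⟩ with hb
  have hb2 : b ^ 2 = 5 := Subtype.coe_injective (by push_cast; exact hy)
  have h0 := congrArg PadicInt.toZMod hb2
  rw [map_pow, map_ofNat] at h0
  have hall : ∀ c : ZMod 3, c ^ 2 ≠ 5 := by decide
  exact hall _ h0

set_option maxHeartbeats 800000 in
/-- Cayley–Hamilton for 2×2 matrices, by direct computation. -/
lemma cayley_two {K : Type*} [Field K] (M : Matrix (Fin 2) (Fin 2) K) :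
    M ^ 2 = M.trace • M - M.det • (1 : Matrix (Fin 2) (Fin 2) K) := by
  ext i j
  fin_cases i <;> fin_cases j <;>
    simp [pow_two, Matrix.mul_apply, Matrix.trace, Matrix.det_fin_two, Fin.sum_univ_two,
      Matrix.smul_apply, Matrix.one_apply, Matrix.sub_apply] <;> ring

/-- `GL₂(ℚ₃)` contains no element of order 5: if `g⁵ = 1` then `g = 1`. -/
theorem GL2_Q3_no_order_five
    (g : Matrix.GeneralLinearGroup (Fin 2) ℚ_[3]) (hg : g ^ 5 = 1) : g = 1 := by
  set M : Matrix (Fin 2) (Fin 2) ℚ_[3] := (g : Matrix (Fin 2) (Fin 2) ℚ_[3]) with hM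
  have hM5 : M ^ 5 = 1 := by
    have := congrArg (Units.val) hg
    simpa [hM] using this
  have hdet : M.det = 1 := by
    apply Q3_fifth_root_eq_one
    rw [← Matrix.det_pow, hM5, Matrix.det_one]
  set t : ℚ_[3] := M.trace with ht
  have h2 : M ^ 2 = t • M - 1 := by
    rw [cayley_two M, hdet, one_smul]
  have h3 : M ^ 3 = (t ^ 2 - 1) • M - t • 1 := by
    have hp : M ^ 3 = M ^ 2 * M := by rw [← pow_succ]
    rw [hp, h2, sub_mul, smul_mul_assoc, one_mul, ← pow_two, h2]
    module
  have h4 : M ^ 4 = (t ^ 3 - 2 * t) • M + (1 - t ^ 2) • 1 := by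
    have hp : M ^ 4 = M ^ 3 * M := by rw [← pow_succ]
    rw [hp, h3, sub_mul, smul_mul_assoc, smul_mul_assoc, one_mul, ← pow_two, h2]
    module
  have h5 : M ^ 5 = (t ^ 4 - 3 * t ^ 2 + 1) • M + (2 * t - t ^ 3) • 1 := by
    have hp : M ^ 5 = M ^ 4 * M := by rw [← pow_succ]
    rw [hp, h4, add_mul, smul_mul_assoc, smul_mul_assoc, one_mul, ← pow_two, h2]
    module
  rw [hM5] at h5
  have key : (t ^ 4 - 3 * t ^ 2 + 1) • M
      = (1 - (2 * t - t ^ 3)) • (1 : Matrix (Fin 2) (Fin 2) ℚ_[3]) := by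
    rw [sub_smul, one_smul]
    exact eq_sub_of_add_eq h5.symm
  by_cases hA : t ^ 4 - 3 * t ^ 2 + 1 = 0
  · rw [hA, zero_smul, eq_comm, smul_eq_zero] at key
    rcases key with hB | hB
    · exfalso
      apply Q3_five_not_square (2 * t + 1)
      have hq : t ^ 2 + t - 1 = 0 := by linear_combination t * hB - hA
      linear_combination 4 * hq
    · exact absurd hB one_ne_zero
  · set c : ℚ_[3] := (1 - (2 * t - t ^ 3)) / (t ^ 4 - 3 * t ^ 2 + 1) with hc
    have hMc : M = c • 1 := by
      rw [hc, div_eq_inv_mul, ← smul_smul, ← key, smul_smul, inv_mul_cancel₀ hA, one_smul]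
    have hc5 : c ^ 5 = 1 := by
      have h := hM5
      rw [hMc, smul_pow, one_pow] at h
      have h00 := congrFun (congrFun h 0) 0
      simpa [Matrix.smul_apply, Matrix.one_apply] using h00
    have hc1 : c = 1 := Q3_fifth_root_eq_one hc5
    have hM1 : M = 1 := by rw [hMc, hc1, one_smul]
    exact Units.ext (by simpa [hM] using hM1)
end
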